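/- arXiv:0905.2254 — 2 statements merged into one kernel-verified Lean document; each statement's English description precedes it below -/
import Mathlib

section
/- For every real β > −1, every real m, and every real a, the area ∫₀ˣ y(t) dt under the curve y(t) = a · t^β · (log(1/t))^m corresponding to the abscissa x satisfies: the ratio of ∫₀ˣ y(t) dt to the rectangle x · y(x) divided by β + 1 tends to 1 as x → 0⁺; that is, the area equals the rectangle formed by the abscissa and the ordinate divided by β + 1, asymptotically. -/
/-!
By L'Hôpital's rule at `0⁺`. Writing `L = log (1/x)`, the area `∫₀ˣ t^β L(t)^m dt` tends to `0`
because `t^β L(t)^m = o(t^γ)` for any `γ < β`, in particular for some `γ > -1`, and the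
rectangle `x^(β+1) L^m` tends to `0` because `β + 1 > 0`. The quotient of their derivatives is
`L / ((β+1) L - m)`, which tends to `1 / (β+1)` as `L → ∞`.
-/

open Filter Real MeasureTheory

open Asymptotics Set Topology

theorem tendsto_intervalIntegral_nhdsGT {E : Type*} [NormedAddCommGroup E] [NormedSpace ℝ E]
    {f : ℝ → E} {a : ℝ} (hf : IntegrableAtFilter f (𝓝[>] a)) :
    Tendsto (fun x => ∫ t in a..x, f t) (𝓝[>] a) (𝓝 0) := by
  obtain ⟨s, hs, hfs⟩ := hf
  obtain ⟨b, hab, hsub⟩ := mem_nhdsGT_iff_exists_Ioc_subset.1 hs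
  have hcont := intervalIntegral.continuousOn_primitive_interval' (μ := volume)
    ((intervalIntegrable_iff_integrableOn_Ioc_of_le hab.le).2 (hfs.mono_set hsub)) left_mem_uIcc
  rw [uIcc_of_le hab.le] at hcont
  simpa using
    ((hcont a (left_mem_Icc.2 hab.le)).mono_of_mem_nhdsWithin (Icc_mem_nhdsGT hab)).tendsto

theorem eventually_hasDerivAt_intervalIntegral_nhdsGT {E : Type*} [NormedAddCommGroup E]
    [NormedSpace ℝ E] [CompleteSpace E] {f : ℝ → E} {a : ℝ} (hf : IntegrableAtFilter f (𝓝[>] a))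
    (hcont : ∀ᶠ x in 𝓝[>] a, ContinuousAt f x) :
    ∀ᶠ x in 𝓝[>] a, HasDerivAt (fun x => ∫ t in a..x, f t) (f x) x := by
  obtain ⟨s, hs, hfs⟩ := hf
  obtain ⟨b, hab, hsub⟩ := mem_nhdsGT_iff_exists_Ioo_subset.1 (inter_mem hs hcont)
  have hcontOn : ContinuousOn f (Ioo a b) := fun x hx => (hsub hx).2.continuousWithinAt
  filter_upwards [Ioo_mem_nhdsGT hab] with x hx
  have hint : IntervalIntegrable f volume a x :=
    (intervalIntegrable_iff_integrableOn_Ioc_of_le hx.1.le).2 <| hfs.mono_set fun t ht =>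
      (hsub ⟨ht.1, ht.2.trans_lt hx.2⟩).1
  exact intervalIntegral.integral_hasDerivAt_right hint
    (hcontOn.stronglyMeasurableAtFilter isOpen_Ioo x hx) (hsub hx).2

theorem isLittleO_rpow_mul_neg_log_rpow_nhdsGT_zero {γ p : ℝ} (h : γ < p) (m : ℝ) :
    (fun x => x ^ p * (-log x) ^ m) =o[𝓝[>] 0] fun x => x ^ γ := by
  have hlog := (isBigO_refl (fun x : ℝ => x ^ p) (𝓝[>] 0)).mul_isLittleO
    (isLittleO_abs_log_rpow_rpow_nhdsGT_zero m (sub_neg.2 h))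
  refine hlog.congr' ?_ ?_
  · filter_upwards [Ioo_mem_nhdsGT one_pos] with x hx
    rw [abs_of_neg (log_neg hx.1 hx.2)]
  · filter_upwards [self_mem_nhdsWithin] with x (hx : 0 < x)
    rw [← rpow_add hx, add_sub_cancel]

theorem tendsto_rpow_mul_neg_log_rpow_nhdsGT_zero {p : ℝ} (hp : 0 < p) (m : ℝ) :
    Tendsto (fun x => x ^ p * (-log x) ^ m) (𝓝[>] 0) (𝓝 0) := by
  simpa only [rpow_zero, isLittleO_one_iff] using
    isLittleO_rpow_mul_neg_log_rpow_nhdsGT_zero hp m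

theorem integrableAtFilter_rpow_mul_neg_log_rpow {β : ℝ} (hβ : -1 < β) (m : ℝ) :
    IntegrableAtFilter (fun t => t ^ β * (-log t) ^ m) (𝓝[>] 0) := by
  have hγ : -1 < (β - 1) / 2 := by linarith
  have hmeas : Measurable fun t : ℝ => t ^ β * (-log t) ^ m := by measurability
  refine (isLittleO_rpow_mul_neg_log_rpow_nhdsGT_zero (by linarith) m).isBigO.integrableAtFilter
    hmeas.aestronglyMeasurable.stronglyMeasurableAtFilter
    ⟨Ioo 0 1, Ioo_mem_nhdsGT one_pos, (intervalIntegral.integrableOn_Ioo_rpow_iff one_pos).2 hγ⟩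

theorem tendsto_neg_log_nhdsGT_zero : Tendsto (fun x => -log x) (𝓝[>] 0) atTop :=
  tendsto_neg_atBot_atTop.comp tendsto_log_nhdsGT_zero

theorem hasDerivAt_rpow_mul_neg_log_rpow {x : ℝ} (hx₀ : 0 < x) (hx₁ : x < 1) (β m : ℝ) :
    HasDerivAt (fun y => y ^ (β + 1) * (-log y) ^ m)
      (x ^ β * (-log x) ^ (m - 1) * ((β + 1) * -log x - m)) x := by
  have hL : 0 < -log x := neg_pos.2 (log_neg hx₀ hx₁)
  have hpow := hasDerivAt_rpow_const (p := β + 1) (Or.inl hx₀.ne')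
  have hlog := ((hasDerivAt_log hx₀.ne').neg).rpow_const (p := m) (Or.inl hL.ne')
  refine (hpow.mul hlog).congr_deriv ?_
  simp only [Pi.neg_apply]
  rw [add_sub_cancel_right, rpow_add_one hx₀.ne', rpow_sub_one hL.ne' m]
  have hlog₀ : log x ≠ 0 := (log_neg hx₀ hx₁).ne
  field_simp
  ring

theorem tendsto_div_const_mul_sub_atTop {c : ℝ} (hc : c ≠ 0) (m : ℝ) :
    Tendsto (fun L => L / (c * L - m)) atTop (𝓝 c⁻¹) := by
  have h := (tendsto_const_nhds (x := c)).sub ((tendsto_const_nhds (x := m)).div_atTop tendsto_id)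
  rw [sub_zero] at h
  refine (h.inv₀ hc).congr' ?_
  filter_upwards [eventually_gt_atTop 0] with L hL
  rw [id]
  field_simp

theorem tendsto_intervalIntegral_div_rpow_mul_neg_log_rpow {β : ℝ} (hβ : -1 < β) (m : ℝ) :
    Tendsto (fun x => (∫ t in 0..x, t ^ β * (-log t) ^ m) / (x ^ (β + 1) * (-log x) ^ m))
      (𝓝[>] 0) (𝓝 (β + 1)⁻¹) := by
  have hβ₁ : 0 < β + 1 := by linarith
  have hint := integrableAtFilter_rpow_mul_neg_log_rpow hβ m
  have hIoo : ∀ᶠ x in 𝓝[>] (0 : ℝ), x ∈ Ioo 0 1 := Ioo_mem_nhdsGT one_pos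
  have hkey : ∀ᶠ x in 𝓝[>] (0 : ℝ), 0 < (β + 1) * -log x - m :=
    (tendsto_neg_log_nhdsGT_zero.const_mul_atTop hβ₁).eventually_gt_atTop m |>.mono
      fun x hx => sub_pos.2 hx
  refine HasDerivAt.lhopital_zero_nhdsGT
    (eventually_hasDerivAt_intervalIntegral_nhdsGT hint ?_)
    (hIoo.mono fun x hx => hasDerivAt_rpow_mul_neg_log_rpow hx.1 hx.2 β m) ?_
    (tendsto_intervalIntegral_nhdsGT hint)
    (tendsto_rpow_mul_neg_log_rpow_nhdsGT_zero hβ₁ m) ?_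
  · filter_upwards [hIoo] with x hx
    have hx₀ : x ≠ 0 := hx.1.ne'
    have hL : -log x ≠ 0 := (neg_pos.2 (log_neg hx.1 hx.2)).ne'
    fun_prop (disch := first | assumption | exact Or.inl ‹_›)
  · filter_upwards [hIoo, hkey] with x hx hk
    have hL : 0 < -log x := neg_pos.2 (log_neg hx.1 hx.2)
    exact (mul_pos (mul_pos (rpow_pos_of_pos hx.1 β) (rpow_pos_of_pos hL _)) hk).ne'
  · refine ((tendsto_div_const_mul_sub_atTop hβ₁.ne' m).comp tendsto_neg_log_nhdsGT_zero).congr' ?_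
    filter_upwards [hIoo, hkey] with x hx hk
    have hL : 0 < -log x := neg_pos.2 (log_neg hx.1 hx.2)
    have hxβ : x ^ β ≠ 0 := (rpow_pos_of_pos hx.1 β).ne'
    rw [Function.comp_apply, rpow_sub_one hL.ne']
    field_simp

theorem area_ratio_rectangle_tendsto_one (β : ℝ) (hβ : -1 < β) (m a : ℝ)
    (ha : a ≠ 0) :
    Tendsto (fun x : ℝ =>
        (∫ t in Set.Ioo (0 : ℝ) x, a * t ^ β * (Real.log (1 / t)) ^ m) /
          (x * (a * x ^ β * (Real.log (1 / x)) ^ m) / (β + 1)))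
      (nhdsWithin 0 (Set.Ioi 0)) (nhds 1) := by
  have hβ₁ : β + 1 ≠ 0 := by linarith
  have hlim := (tendsto_intervalIntegral_div_rpow_mul_neg_log_rpow hβ m).const_mul (β + 1)
  rw [mul_inv_cancel₀ hβ₁] at hlim
  refine hlim.congr' ?_
  filter_upwards [self_mem_nhdsWithin] with x (hx : 0 < x)
  simp_rw [one_div, log_inv, mul_assoc a]
  have hrect : x * (a * (x ^ β * (-log x) ^ m)) = a * (x ^ (β + 1) * (-log x) ^ m) := by
    rw [rpow_add_one hx.ne']
    ring
  rw [integral_const_mul, ← integral_Ioc_eq_integral_Ioo, ← intervalIntegral.integral_of_le hx.le,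
    hrect, div_div_eq_mul_div, mul_assoc, mul_div_mul_left _ _ ha]
  ring
end

section
/- For all real numbers α > 0 and β > 0 and every real n (positive or negative), the ratio of the integral ∫₀ˣ t^n · exp(−α / t^β) dt to the quantity (1/(αβ)) · x^(n+β+1) · exp(−α / x^β) tends to 1 as x tends to 0 from the right; that is, ∫ x^n dx / v = x^(n+β+1) / (αβ · v) asymptotically, where v = exp(α / x^β). -/
open Filter Real MeasureTheory Set Topology

/-! L'Hôpital's rule at `0⁺`. Numerator and denominator both tend to `0`, because
`t ^ m * exp (-α / t ^ β) → 0` as `t → 0⁺` for every real `m`. The derivative of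
`x ^ (n + β + 1) * exp (-α / x ^ β)` is
`x ^ n * exp (-α / x ^ β) * (α * β + (n + β + 1) * x ^ β)`, so the ratio of
derivatives is `α * β / (α * β + (n + β + 1) * x ^ β) → 1`. -/

theorem integrableOn_Ioc_of_continuousOn_of_tendsto {E : Type*} [NormedAddCommGroup E]
    {f : ℝ → E} {a b : ℝ} {l : E} (hf : ContinuousOn f (Ioc a b))
    (hl : Tendsto f (𝓝[>] a) (𝓝 l)) : IntegrableOn f (Ioc a b) := by
  classical
  have hcont : ContinuousOn (Function.update f a l) (Icc a b) := by
    intro x hx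
    rcases eq_or_ne x a with rfl | hxa
    · rw [continuousWithinAt_update_same]
      exact hl.mono_left (nhdsWithin_mono _ fun t ht => lt_of_le_of_ne ht.1.1 (Ne.symm ht.2))
    · rw [continuousWithinAt_update_of_ne hxa, ← continuousWithinAt_sdiff_singleton (y := a),
        Icc_sdiff_left]
      exact hf x ⟨lt_of_le_of_ne hx.1 hxa.symm, hx.2⟩
  refine (hcont.integrableOn_Icc.mono_set Ioc_subset_Icc_self).congr_fun
    (fun t ht => Function.update_of_ne ht.1.ne' _ _) measurableSet_Ioc

theorem tendsto_rpow_mul_exp_neg_div_rpow_nhdsGT_zero {α β : ℝ} (hα : 0 < α) (hβ : 0 < β)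
    (m : ℝ) : Tendsto (fun t : ℝ => t ^ m * exp (-α / t ^ β)) (𝓝[>] 0) (𝓝 0) := by
  refine ((tendsto_rpow_mul_exp_neg_mul_atTop_nhds_zero (-m / β) α hα).comp
    (tendsto_rpow_neg_nhdsGT_zero (neg_neg_of_pos hβ))).congr' ?_
  filter_upwards [self_mem_nhdsWithin] with t (ht : 0 < t)
  rw [Function.comp_apply, ← rpow_mul ht.le, rpow_neg ht.le, div_eq_mul_inv (-α)]
  congr 2
  field_simp

theorem tendsto_const_add_mul_rpow_nhdsGT_zero (a c : ℝ) {β : ℝ} (hβ : 0 < β) :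
    Tendsto (fun x : ℝ => a + c * x ^ β) (𝓝[>] 0) (𝓝 a) := by
  have h := ((continuous_rpow_const hβ.le).tendsto' 0 0 (zero_rpow hβ.ne')).mono_left
    (nhdsWithin_le_nhds (s := Ioi 0))
  simpa using (h.const_mul c).const_add a

theorem continuousOn_rpow_mul_exp_neg_div_rpow (α β n : ℝ) :
    ContinuousOn (fun t : ℝ => t ^ n * exp (-α / t ^ β)) (Ioi 0) := by
  fun_prop (disch := intro t (ht : 0 < t); positivity)

theorem hasDerivAt_rpow_mul_exp_neg_div_rpow (α β n : ℝ) {x : ℝ} (hx : 0 < x) :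
    HasDerivAt (fun t : ℝ => t ^ (n + β + 1) * exp (-α / t ^ β))
      (x ^ n * exp (-α / x ^ β) * (α * β + (n + β + 1) * x ^ β)) x := by
  have hpow := hasDerivAt_rpow_const (x := x) (p := n + β + 1) (Or.inl hx.ne')
  have hinv : HasDerivAt (fun t : ℝ => -α / t ^ β) (α * β * x ^ (-β - 1)) x := by
    have := (hasDerivAt_rpow_const (x := x) (p := -β) (Or.inl hx.ne')).const_mul (-α)
    refine (this.congr_deriv (by ring)).congr_of_eventuallyEq ?_
    filter_upwards [Ioi_mem_nhds hx] with t (ht : 0 < t)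
    rw [rpow_neg ht.le, div_eq_mul_inv]
  refine (hpow.mul hinv.exp).congr_deriv ?_
  have h1 : x ^ (n + β + 1 - 1) = x ^ n * x ^ β := by rw [← rpow_add hx]; ring_nf
  have h2 : x ^ (n + β + 1) * x ^ (-β - 1) = x ^ n := by rw [← rpow_add hx]; ring_nf
  linear_combination ((n + β + 1) * exp (-α / x ^ β)) * h1 + (α * β * exp (-α / x ^ β)) * h2

section Primitive

variable {E : Type*} [NormedAddCommGroup E] [NormedSpace ℝ E] {f : ℝ → E} {a b : ℝ}

theorem setIntegral_Ioo_eq_intervalIntegral {y : ℝ} (hay : a ≤ y) :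
    ∫ t in Ioo a y, f t = ∫ t in a..y, f t := by
  rw [intervalIntegral.integral_of_le hay, integral_Ioc_eq_integral_Ioo]

theorem hasDerivAt_setIntegral_Ioo [CompleteSpace E] (hf : IntegrableOn f (Ioc a b)) {x : ℝ}
    (hx : x ∈ Ioo a b) (hfx : ContinuousAt f x) :
    HasDerivAt (fun y => ∫ t in Ioo a y, f t) (f x) x := by
  have hint : IntervalIntegrable f volume a x :=
    (intervalIntegrable_iff_integrableOn_Ioc_of_le hx.1.le).2
      (hf.mono_set (Ioc_subset_Ioc_right hx.2.le))
  have hmeas : StronglyMeasurableAtFilter f (𝓝 x) :=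
    AEStronglyMeasurable.stronglyMeasurableAtFilter_of_mem hf.aestronglyMeasurable
      (Ioc_mem_nhds hx.1 hx.2)
  refine (intervalIntegral.integral_hasDerivAt_right hint hmeas hfx).congr_of_eventuallyEq ?_
  filter_upwards [Ioi_mem_nhds hx.1] with y hy
  exact setIntegral_Ioo_eq_intervalIntegral hy.le

theorem tendsto_setIntegral_Ioo_nhdsGT [CompleteSpace E] (hf : IntegrableOn f (Ioc a b))
    (hab : a < b) :
    Tendsto (fun y => ∫ t in Ioo a y, f t) (𝓝[>] a) (𝓝 0) := by
  have hprim := intervalIntegral.continuousOn_primitive_interval (a := a) (b := b) (μ := volume)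
    (by rwa [uIcc_of_le hab.le, integrableOn_Icc_iff_integrableOn_Ioc (f := f)])
  rw [uIcc_of_le hab.le] at hprim
  have h0 := hprim a (left_mem_Icc.2 hab.le)
  rw [ContinuousWithinAt, intervalIntegral.integral_same] at h0
  refine (h0.mono_left (nhdsWithin_le_of_mem (Icc_mem_nhdsGT hab))).congr' ?_
  filter_upwards [self_mem_nhdsWithin] with y hy
  exact (setIntegral_Ioo_eq_intervalIntegral hy.le).symm

end Primitive

theorem integral_rpow_mul_exp_neg_inv_rpow_ratio_tendsto_one (α β : ℝ)
    (hα : 0 < α) (hβ : 0 < β) (n : ℝ) :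
    Tendsto (fun x : ℝ =>
        (∫ t in Set.Ioo (0 : ℝ) x, t ^ n * Real.exp (-α / t ^ β)) /
          (1 / (α * β) * (x ^ (n + β + 1) * Real.exp (-α / x ^ β))))
      (nhdsWithin 0 (Set.Ioi 0)) (nhds 1) := by
  have hcont := continuousOn_rpow_mul_exp_neg_div_rpow α β n
  have hint : IntegrableOn (fun t : ℝ => t ^ n * exp (-α / t ^ β)) (Ioc 0 1) :=
    integrableOn_Ioc_of_continuousOn_of_tendsto (hcont.mono Ioc_subset_Ioi_self)
      (tendsto_rpow_mul_exp_neg_div_rpow_nhdsGT_zero hα hβ n)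
  have hαβ : 0 < α * β := mul_pos hα hβ
  have hden := tendsto_const_add_mul_rpow_nhdsGT_zero (α * β) (n + β + 1) hβ
  have hden_pos : ∀ᶠ x in 𝓝[>] 0, 0 < α * β + (n + β + 1) * x ^ β :=
    hden.eventually (eventually_gt_nhds hαβ)
  refine HasDerivAt.lhopital_zero_nhdsGT (f' := fun t => t ^ n * exp (-α / t ^ β))
    (g' := fun x =>
      1 / (α * β) * (x ^ n * exp (-α / x ^ β) * (α * β + (n + β + 1) * x ^ β)))
    ?_ ?_ ?_ (tendsto_setIntegral_Ioo_nhdsGT hint one_pos) ?_ ?_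
  · filter_upwards [Ioo_mem_nhdsGT one_pos] with x hx
    exact hasDerivAt_setIntegral_Ioo hint hx ((hcont x hx.1).continuousAt (Ioi_mem_nhds hx.1))
  · filter_upwards [self_mem_nhdsWithin] with x (hx : 0 < x)
    exact (hasDerivAt_rpow_mul_exp_neg_div_rpow α β n hx).const_mul _
  · filter_upwards [self_mem_nhdsWithin, hden_pos] with x (hx : 0 < x) hpos
    positivity
  · simpa using (tendsto_rpow_mul_exp_neg_div_rpow_nhdsGT_zero hα hβ (n + β + 1)).const_mul
      (1 / (α * β))
  · have hlim := (tendsto_const_nhds (x := α * β)).div hden hαβ.ne'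
    rw [div_self hαβ.ne'] at hlim
    refine hlim.congr' ?_
    filter_upwards [self_mem_nhdsWithin, hden_pos] with x (hx : 0 < x) hpos
    have : 0 < x ^ n * exp (-α / x ^ β) := by positivity
    simp only [Pi.div_apply]
    field_simp
end
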